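/- (Contraction lemma, case α < 1.) Fix a bird ℓ ∈ {2,…,k}, p ∈ (0,1] and 0 < α < 1, and assume v0 > 0. Set A0 = 1 + 2x0 and B0 = 2h v0. Then for all integers 0 ≤ τ ≤ t, almost surely E[ ∏_{σ=τ+1}^{t+1} (1 − h Σ_{j∈L(ℓ)} a_{ℓj}[σ]) | F_τ ] ≤ exp( −(hp/((1−α)B0)) ( (A0 + B0 t)^{1−α} − (A0 + B0 τ)^{1−α} ) ). -/

import Mathlib

open MeasureTheory Finset Filter

private lemma aux_condexp_prod_le {Ω : Type*} [m0 : MeasurableSpace Ω]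
    (μ : Measure Ω) [IsProbabilityMeasure μ]
    (F : ℕ → MeasurableSpace Ω) (hFle : ∀ t, F t ≤ m0) (hFmono : Monotone F)
    (Y : ℕ → Ω → ℝ) (c : ℕ → ℝ)
    (hYm : ∀ s, Measurable[F s] (Y s))
    (hY0 : ∀ s ω, 0 ≤ Y s ω) (hY1 : ∀ s ω, Y s ω ≤ 1)
    (hc0 : ∀ s, 0 ≤ c s)
    (hstep : ∀ s, (μ[Y (s+1)|F s]) ≤ᵐ[μ] fun _ => c s) :
    ∀ τ t : ℕ, τ ≤ t → ∀ᵐ ω ∂μ,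
      (μ[fun ω' => ∏ σ ∈ Finset.Icc (τ+1) (t+1), Y σ ω'|F τ]) ω ≤
        ∏ s ∈ Finset.Icc τ t, c s := by
  intro τ t ht
  have hint01 : ∀ f : Ω → ℝ, Measurable f → (∀ ω, 0 ≤ f ω) → (∀ ω, f ω ≤ 1) →
      Integrable f μ := fun f hm h0 h1 =>
    (integrable_const (1:ℝ)).mono' hm.aestronglyMeasurable
      (ae_of_all _ fun ω => by
        rw [Real.norm_eq_abs, abs_of_nonneg (h0 ω)]; exact h1 ω)
  have hPm : ∀ u : ℕ, Measurable[F (u+1)] (fun ω' => ∏ σ ∈ Finset.Icc (τ+1) (u+1), Y σ ω') := by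
    intro u
    refine Finset.measurable_prod _ fun σ hσ => ?_
    have hσ' : σ ≤ u + 1 := (Finset.mem_Icc.1 hσ).2
    exact (hYm σ).mono (hFmono hσ') le_rfl
  have hP0 : ∀ u ω, 0 ≤ ∏ σ ∈ Finset.Icc (τ+1) (u+1), Y σ ω :=
    fun u ω => Finset.prod_nonneg fun σ _ => hY0 σ ω
  have hP1 : ∀ u ω, ∏ σ ∈ Finset.Icc (τ+1) (u+1), Y σ ω ≤ 1 :=
    fun u ω => Finset.prod_le_one (fun σ _ => hY0 σ ω) (fun σ _ => hY1 σ ω)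
  have hPint : ∀ u, Integrable (fun ω' => ∏ σ ∈ Finset.Icc (τ+1) (u+1), Y σ ω') μ :=
    fun u => hint01 _ ((hPm u).mono (hFle _) le_rfl) (hP0 u) (hP1 u)
  induction t, ht using Nat.le_induction with
  | base =>
    have e : (fun ω' => ∏ σ ∈ Finset.Icc (τ+1) (τ+1), Y σ ω') = Y (τ+1) := by
      funext ω'; simp
    rw [e, Finset.Icc_self, Finset.prod_singleton]
    filter_upwards [hstep τ] with ω hω
    exact hω
  | succ t ht ih =>
    have hYint : Integrable (Y (t+1+1)) μ :=
      hint01 _ ((hYm _).mono (hFle _) le_rfl) (hY0 _) (hY1 _)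
    set P : Ω → ℝ := fun ω' => ∏ σ ∈ Finset.Icc (τ+1) (t+1), Y σ ω' with hPdef
    have hsplit : (fun ω' => ∏ σ ∈ Finset.Icc (τ+1) (t+1+1), Y σ ω') = P * Y (t+1+1) := by
      funext ω'
      simp only [Pi.mul_apply, hPdef]
      exact Finset.prod_Icc_succ_top (by omega) _
    have hPYint : Integrable (P * Y (t+1+1)) μ := by
      apply hint01
      · exact ((hPm t).mono (hFle _) le_rfl).mul ((hYm _).mono (hFle _) le_rfl)
      · intro ω; exact mul_nonneg (hP0 t ω) (hY0 _ ω)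
      · intro ω
        exact mul_le_one₀ (hP1 t ω) (hY0 _ ω) (hY1 _ ω)
    have hmul : μ[P * Y (t+1+1)|F (t+1)] =ᵐ[μ] P * μ[Y (t+1+1)|F (t+1)] :=
      condExp_mul_of_stronglyMeasurable_left ((hPm t).stronglyMeasurable) hPYint hYint
    have htower : μ[P * Y (t+1+1)|F τ] =ᵐ[μ] μ[μ[P * Y (t+1+1)|F (t+1)]|F τ] :=
      (condExp_condExp_of_le (hFmono (by omega)) (hFle (t+1))).symm
    have h2 : μ[μ[P * Y (t+1+1)|F (t+1)]|F τ] =ᵐ[μ] μ[P * μ[Y (t+1+1)|F (t+1)]|F τ] :=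
      condExp_congr_ae hmul
    have hintPg : Integrable (P * μ[Y (t+1+1)|F (t+1)]) μ := integrable_condExp.congr hmul
    have hle1 : P * μ[Y (t+1+1)|F (t+1)] ≤ᵐ[μ] c (t+1) • P := by
      filter_upwards [hstep (t+1)] with ω hω
      have hω' : (μ[Y (t+1+1)|F (t+1)]) ω ≤ c (t+1) := hω
      simp only [Pi.mul_apply, Pi.smul_apply, smul_eq_mul]
      calc P ω * (μ[Y (t+1+1)|F (t+1)]) ω ≤ P ω * c (t+1) :=
            mul_le_mul_of_nonneg_left hω' (hP0 t ω)
        _ = c (t+1) * P ω := mul_comm _ _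
    have hle2 : μ[P * μ[Y (t+1+1)|F (t+1)]|F τ] ≤ᵐ[μ] μ[c (t+1) • P|F τ] :=
      condExp_mono hintPg ((hPint t).smul (c (t+1))) hle1
    have h3 : μ[c (t+1) • P|F τ] =ᵐ[μ] c (t+1) • μ[P|F τ] := condExp_smul _ _ _
    filter_upwards [htower, h2, hle2, h3, ih] with ω w1 w2 w3 w4 w5
    rw [hsplit]
    calc (μ[P * Y (t+1+1)|F τ]) ω
        = (μ[P * μ[Y (t+1+1)|F (t+1)]|F τ]) ω := by rw [w1, w2]
      _ ≤ (μ[c (t+1) • P|F τ]) ω := w3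
      _ = c (t+1) * (μ[P|F τ]) ω := by rw [w4]; simp
      _ ≤ c (t+1) * ∏ s ∈ Finset.Icc τ t, c s :=
          mul_le_mul_of_nonneg_left w5 (hc0 _)
      _ = ∏ s ∈ Finset.Icc τ (t+1), c s := by
          rw [Finset.prod_Icc_succ_top (by omega : τ ≤ t + 1)]; ring

/-- Contraction lemma, case `α < 1`: under Condition (K), for a bird `ℓ ∈ {2,…,k}`
(zero-based index `0 < ℓ`), `p ∈ (0,1]`, `0 < α < 1` and `v0 = ‖v[0]‖∞ > 0`, setting
`A0 = 1 + 2 x0` and `B0 = 2 h v0` (with `x0 = ‖x[0]‖∞`), for all integers `0 ≤ τ ≤ t`,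
almost surely
`E[ ∏_{σ=τ+1}^{t+1} (1 − h Σ_{j∈L(ℓ)} a_{ℓj}[σ]) | F_τ ]
  ≤ exp( −(hp/((1−α)B0)) ((A0 + B0 t)^{1−α} − (A0 + B0 τ)^{1−α}) )`. -/
theorem contraction_lemma_alpha_lt_one
    (k : ℕ) (hk : 2 ≤ k)
    (Ω : Type*) [m0 : MeasurableSpace Ω]
    (μ : Measure Ω) [IsProbabilityMeasure μ]
    (F : ℕ → MeasurableSpace Ω)
    (hFle : ∀ t, F t ≤ m0) (hFmono : Monotone F)
    (x v : ℕ → Ω → Fin k → EuclideanSpace ℝ (Fin 3))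
    (L : Fin k → Finset (Fin k))
    (a : ℕ → Ω → Fin k → Fin k → ℝ)
    (h : ℝ) (hh0 : 0 < h) (hh1 : h ≤ 1 / ((k : ℝ) - 1))
    (hLlt : ∀ i : Fin k, ∀ j ∈ L i, j < i)
    (hLne : ∀ i : Fin k, 0 < i.val → (L i).Nonempty)
    (ha0 : ∀ t ω, ∀ i : Fin k, ∀ j ∈ L i, 0 ≤ a t ω i j)
    (ha1 : ∀ t ω, ∀ i : Fin k, ∀ j ∈ L i, a t ω i j ≤ 1)
    (hxmeas : ∀ t, Measurable[F t] (x t))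
    (hvmeas : ∀ t, Measurable[F t] (v t))
    (hameas : ∀ t, ∀ i : Fin k, ∀ j ∈ L i, Measurable[F t] (fun ω => a t ω i j))
    (hxdyn : ∀ t ω i, x (t + 1) ω i = x t ω i + h • v t ω i)
    (hvdyn : ∀ t ω i, v (t + 1) ω i =
      v t ω i + h • ∑ j ∈ L i, a (t + 1) ω i j • (v t ω j - v t ω i))
    (X0 V0 : Fin k → EuclideanSpace ℝ (Fin 3))
    (hX0 : ∀ ω, x 0 ω = X0) (hV0 : ∀ ω, v 0 ω = V0)
    (hX0z : X0 ⟨0, by omega⟩ = 0) (hV0z : V0 ⟨0, by omega⟩ = 0)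
    (p : ℝ) (hp0 : 0 < p) (hp1 : p ≤ 1)
    (α : ℝ) (hα0 : 0 < α) (hα1 : α < 1)
    (hK : ∀ t : ℕ, ∀ i : Fin k, ∀ j ∈ L i,
      ∀ᵐ ω ∂μ, p / (1 + ‖x t ω i - x t ω j‖) ^ α ≤
        (μ[fun ω' => a (t + 1) ω' i j | F t]) ω)
    (ℓ : Fin k) (hℓ : 0 < ℓ.val)
    (hv0pos : 0 < ‖V0‖) :
    ∀ τ t : ℕ, τ ≤ t →
      ∀ᵐ ω ∂μ,
        (μ[fun ω' => ∏ σ ∈ Finset.Icc (τ + 1) (t + 1),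
            (1 - h * ∑ j ∈ L ℓ, a σ ω' ℓ j) | F τ]) ω ≤
          Real.exp (-(h * p / ((1 - α) * (2 * h * ‖V0‖))) *
            ((1 + 2 * ‖X0‖ + 2 * h * ‖V0‖ * t) ^ (1 - α) -
              (1 + 2 * ‖X0‖ + 2 * h * ‖V0‖ * τ) ^ (1 - α))) := by
  set A0 : ℝ := 1 + 2 * ‖X0‖ with hA0def
  set B0 : ℝ := 2 * h * ‖V0‖ with hB0def
  have hA0ge1 : (1:ℝ) ≤ A0 := by
    have := norm_nonneg X0
    rw [hA0def]; linarith
  have hB0pos : (0:ℝ) < B0 := by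
    rw [hB0def]
    exact mul_pos (mul_pos two_pos hh0) hv0pos
  have hk1 : (1:ℝ) ≤ (k:ℝ) - 1 := by
    have : (2:ℝ) ≤ (k:ℝ) := by exact_mod_cast hk
    linarith
  have hhk : h * ((k:ℝ) - 1) ≤ 1 := by
    calc h * ((k:ℝ) - 1) ≤ (1 / ((k:ℝ) - 1)) * ((k:ℝ) - 1) :=
          mul_le_mul_of_nonneg_right hh1 (by linarith)
      _ = 1 := by field_simp
  have hh_le_one : h ≤ 1 := by
    have h1 : 1 / ((k:ℝ) - 1) ≤ 1 := by
      rw [div_le_one (by linarith)]; linarith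
    linarith
  have hcard : ∀ i : Fin k, ((L i).card : ℝ) ≤ (k:ℝ) - 1 := by
    intro i
    have h1 : (L i).card ≤ k - 1 := by
      have hsub : L i ⊆ Finset.univ.erase i := fun j hj =>
        Finset.mem_erase.2 ⟨Fin.ne_of_lt (hLlt i j hj), Finset.mem_univ j⟩
      calc (L i).card ≤ (Finset.univ.erase i).card := Finset.card_le_card hsub
        _ = k - 1 := by
            rw [Finset.card_erase_of_mem (Finset.mem_univ i), Finset.card_univ,
              Fintype.card_fin]
    have h2 : ((L i).card : ℝ) ≤ ((k - 1 : ℕ) : ℝ) := by exact_mod_cast h1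
    rwa [Nat.cast_sub (by omega), Nat.cast_one] at h2
  have hSnn : ∀ σ : ℕ, ∀ ω, ∀ i : Fin k, 0 ≤ ∑ j ∈ L i, a σ ω i j :=
    fun σ ω i => Finset.sum_nonneg fun j hj => ha0 σ ω i j hj
  have hSle : ∀ σ : ℕ, ∀ ω, ∀ i : Fin k, ∑ j ∈ L i, a σ ω i j ≤ (k:ℝ) - 1 := by
    intro σ ω i
    calc ∑ j ∈ L i, a σ ω i j ≤ ∑ _j ∈ L i, (1:ℝ) :=
          Finset.sum_le_sum fun j hj => ha1 σ ω i j hj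
      _ = ((L i).card : ℝ) := by simp
      _ ≤ (k:ℝ) - 1 := hcard i
  have hhS : ∀ σ : ℕ, ∀ ω, ∀ i : Fin k, h * (∑ j ∈ L i, a σ ω i j) ≤ 1 :=
    fun σ ω i => le_trans (mul_le_mul_of_nonneg_left (hSle σ ω i) hh0.le) hhk
  -- velocity bound
  have hvb : ∀ n : ℕ, ∀ ω, ∀ i : Fin k, ‖v n ω i‖ ≤ ‖V0‖ := by
    intro n
    induction n with
    | zero => intro ω i; rw [hV0 ω]; exact norm_le_pi_norm V0 i
    | succ n ih =>
      intro ω i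
      rw [hvdyn n ω i]
      have hsum : ∑ j ∈ L i, a (n+1) ω i j • (v n ω j - v n ω i)
          = (∑ j ∈ L i, a (n+1) ω i j • v n ω j)
            - (∑ j ∈ L i, a (n+1) ω i j) • v n ω i := by
        calc ∑ j ∈ L i, a (n+1) ω i j • (v n ω j - v n ω i)
            = ∑ j ∈ L i, (a (n+1) ω i j • v n ω j - a (n+1) ω i j • v n ω i) :=
              Finset.sum_congr rfl fun j _ => smul_sub _ _ _
          _ = (∑ j ∈ L i, a (n+1) ω i j • v n ω j)
              - ∑ j ∈ L i, a (n+1) ω i j • v n ω i := Finset.sum_sub_distrib _ _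
          _ = (∑ j ∈ L i, a (n+1) ω i j • v n ω j)
              - (∑ j ∈ L i, a (n+1) ω i j) • v n ω i := by rw [Finset.sum_smul]
      rw [hsum]
      have hrw : v n ω i + h • ((∑ j ∈ L i, a (n+1) ω i j • v n ω j)
            - (∑ j ∈ L i, a (n+1) ω i j) • v n ω i)
          = (1 - h * ∑ j ∈ L i, a (n+1) ω i j) • v n ω i
            + h • ∑ j ∈ L i, a (n+1) ω i j • v n ω j := by
        rw [smul_sub, sub_smul, one_smul, smul_smul]
        abel
      rw [hrw]
      have hS0 := hSnn (n+1) ω i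
      have hS1 := hhS (n+1) ω i
      calc ‖(1 - h * ∑ j ∈ L i, a (n+1) ω i j) • v n ω i
            + h • ∑ j ∈ L i, a (n+1) ω i j • v n ω j‖
          ≤ ‖(1 - h * ∑ j ∈ L i, a (n+1) ω i j) • v n ω i‖
            + ‖h • ∑ j ∈ L i, a (n+1) ω i j • v n ω j‖ := norm_add_le _ _
        _ ≤ (1 - h * ∑ j ∈ L i, a (n+1) ω i j) * ‖V0‖
            + h * ∑ j ∈ L i, a (n+1) ω i j * ‖V0‖ := by
            apply add_le_add
            · rw [norm_smul, Real.norm_eq_abs, abs_of_nonneg (by linarith)]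
              exact mul_le_mul_of_nonneg_left (ih ω i) (by linarith)
            · rw [norm_smul, Real.norm_eq_abs, abs_of_nonneg hh0.le]
              apply mul_le_mul_of_nonneg_left _ hh0.le
              calc ‖∑ j ∈ L i, a (n+1) ω i j • v n ω j‖
                  ≤ ∑ j ∈ L i, ‖a (n+1) ω i j • v n ω j‖ := norm_sum_le _ _
                _ ≤ ∑ j ∈ L i, a (n+1) ω i j * ‖V0‖ := by
                    apply Finset.sum_le_sum
                    intro j hj
                    rw [norm_smul, Real.norm_eq_abs, abs_of_nonneg (ha0 _ ω i j hj)]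
                    exact mul_le_mul_of_nonneg_left (ih ω j) (ha0 _ ω i j hj)
        _ = ‖V0‖ := by rw [← Finset.sum_mul]; ring
  -- position bound
  have hxb : ∀ n : ℕ, ∀ ω, ∀ i : Fin k, ‖x n ω i‖ ≤ ‖X0‖ + h * n * ‖V0‖ := by
    intro n
    induction n with
    | zero => intro ω i; rw [hX0 ω]; simpa using norm_le_pi_norm X0 i
    | succ n ih =>
      intro ω i
      rw [hxdyn n ω i]
      have h1 := ih ω i
      have h2 := hvb n ω i
      calc ‖x n ω i + h • v n ω i‖ ≤ ‖x n ω i‖ + ‖h • v n ω i‖ := norm_add_le _ _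
        _ ≤ (‖X0‖ + h * n * ‖V0‖) + h * ‖V0‖ := by
            apply add_le_add h1
            rw [norm_smul, Real.norm_eq_abs, abs_of_nonneg hh0.le]
            exact mul_le_mul_of_nonneg_left h2 hh0.le
        _ = ‖X0‖ + h * ((n:ℝ)+1) * ‖V0‖ := by ring
        _ = ‖X0‖ + h * ((n+1 : ℕ):ℝ) * ‖V0‖ := by push_cast; ring
  have hdist : ∀ n : ℕ, ∀ ω, ∀ i j : Fin k,
      1 + ‖x n ω i - x n ω j‖ ≤ A0 + B0 * n := by
    intro n ω i j
    have h1 := hxb n ω i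
    have h2 := hxb n ω j
    have h3 := norm_sub_le (x n ω i) (x n ω j)
    have e : A0 + B0 * n = 1 + 2*‖X0‖ + 2*(h * n * ‖V0‖) := by
      rw [hA0def, hB0def]; ring
    linarith
  have hA1 : ∀ n : ℕ, (1:ℝ) ≤ A0 + B0 * n := by
    intro n
    have hn : (0:ℝ) ≤ B0 * n := mul_nonneg hB0pos.le (Nat.cast_nonneg n)
    linarith
  have hApos : ∀ n : ℕ, (0:ℝ) < A0 + B0 * n := fun n => lt_of_lt_of_le one_pos (hA1 n)
  have hone_le_rpow : ∀ n : ℕ, (1:ℝ) ≤ (A0 + B0*(n:ℝ)) ^ α := by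
    intro n
    have h1 : ((1:ℝ)) ^ α ≤ (A0 + B0*(n:ℝ)) ^ α :=
      Real.rpow_le_rpow (by norm_num) (hA1 n) hα0.le
    rwa [Real.one_rpow] at h1
  have hc0 : ∀ n : ℕ, 0 ≤ 1 - h * (p/(A0+B0*(n:ℝ))^α) := by
    intro n
    have h1 : p/(A0+B0*(n:ℝ))^α ≤ p := div_le_self hp0.le (hone_le_rpow n)
    have h2 : h * (p/(A0+B0*(n:ℝ))^α) ≤ h * p :=
      mul_le_mul_of_nonneg_left h1 hh0.le
    have h3 : h * p ≤ h * 1 := mul_le_mul_of_nonneg_left hp1 hh0.le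
    linarith
  -- integrability helper
  have hint01 : ∀ f : Ω → ℝ, Measurable f → (∀ ω, 0 ≤ f ω) → (∀ ω, f ω ≤ 1) →
      Integrable f μ := fun f hm h0 h1 =>
    (integrable_const (1:ℝ)).mono' hm.aestronglyMeasurable
      (ae_of_all _ fun ω => by
        rw [Real.norm_eq_abs, abs_of_nonneg (h0 ω)]; exact h1 ω)
  -- step bound on conditional expectations
  have hstepC : ∀ s : ℕ,
      (μ[fun ω => 1 - h * ∑ j ∈ L ℓ, a (s+1) ω ℓ j|F s]) ≤ᵐ[μ]
        fun _ => 1 - h * (p/(A0+B0*(s:ℝ))^α) := by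
    intro s
    have hintaj : ∀ j ∈ L ℓ, Integrable (fun ω => a (s+1) ω ℓ j) μ :=
      fun j hj => hint01 _ ((hameas (s+1) ℓ j hj).mono (hFle _) le_rfl)
        (fun ω => ha0 _ ω ℓ j hj) (fun ω => ha1 _ ω ℓ j hj)
    have hintS : Integrable (fun ω => ∑ j ∈ L ℓ, a (s+1) ω ℓ j) μ := by
      exact integrable_finset_sum _ hintaj
    have e1 : (fun ω => 1 - h * ∑ j ∈ L ℓ, a (s+1) ω ℓ j)
        = (fun _ : Ω => (1:ℝ)) - h • (fun ω => ∑ j ∈ L ℓ, a (s+1) ω ℓ j) := by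
      funext ω; simp [smul_eq_mul]
    have hc1 : μ[(fun _ : Ω => (1:ℝ)) - h • (fun ω => ∑ j ∈ L ℓ, a (s+1) ω ℓ j)|F s]
        =ᵐ[μ] μ[(fun _ : Ω => (1:ℝ))|F s]
          - μ[h • (fun ω => ∑ j ∈ L ℓ, a (s+1) ω ℓ j)|F s] :=
      condExp_sub (integrable_const 1) (hintS.smul h) _
    have hc2 : μ[h • (fun ω => ∑ j ∈ L ℓ, a (s+1) ω ℓ j)|F s]
        =ᵐ[μ] h • μ[(fun ω => ∑ j ∈ L ℓ, a (s+1) ω ℓ j)|F s] := condExp_smul h _ _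
    have hc3 : μ[(fun ω => ∑ j ∈ L ℓ, a (s+1) ω ℓ j)|F s]
        =ᵐ[μ] ∑ j ∈ L ℓ, μ[fun ω => a (s+1) ω ℓ j|F s] := by
      have e2 : (fun ω => ∑ j ∈ L ℓ, a (s+1) ω ℓ j)
          = ∑ j ∈ L ℓ, (fun ω => a (s+1) ω ℓ j) := by
        funext ω; simp
      rw [e2]
      exact condExp_finsetSum hintaj _
    have hKb : ∀ᵐ ω ∂μ, ∀ j : Fin k, j ∈ L ℓ →
        p/(A0+B0*(s:ℝ))^α ≤ (μ[fun ω' => a (s+1) ω' ℓ j|F s]) ω := by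
      rw [ae_all_iff]
      intro j
      by_cases hj : j ∈ L ℓ
      · filter_upwards [hK s ℓ j hj] with ω hω _
        refine le_trans ?_ hω
        have hd := hdist s ω ℓ j
        have h1d : (0:ℝ) < 1 + ‖x s ω ℓ - x s ω j‖ := by positivity
        have hpow : (1 + ‖x s ω ℓ - x s ω j‖)^α ≤ (A0+B0*(s:ℝ))^α :=
          Real.rpow_le_rpow h1d.le hd hα0.le
        exact div_le_div_of_nonneg_left hp0.le (Real.rpow_pos_of_pos h1d α) hpow
      · exact ae_of_all _ fun ω hj' => absurd hj' hj
    rw [e1]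
    filter_upwards [hc1, hc2, hc3, hKb] with ω w1 w2 w3 w4
    have hval : (μ[(fun _ : Ω => (1:ℝ)) - h • (fun ω' => ∑ j ∈ L ℓ, a (s+1) ω' ℓ j)|F s]) ω
        = 1 - h * ∑ j ∈ L ℓ, (μ[fun ω' => a (s+1) ω' ℓ j|F s]) ω := by
      rw [w1]
      simp only [Pi.sub_apply]
      rw [condExp_const (hFle s), w2]
      simp only [Pi.smul_apply, smul_eq_mul]
      rw [w3]
      simp [Finset.sum_apply]
    rw [hval]
    have hqnn : (0:ℝ) ≤ p/(A0+B0*(s:ℝ))^α :=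
      div_nonneg hp0.le (Real.rpow_nonneg (hApos s).le α)
    obtain ⟨j0, hj0⟩ := hLne ℓ hℓ
    have hsumge : p/(A0+B0*(s:ℝ))^α
        ≤ ∑ j ∈ L ℓ, (μ[fun ω' => a (s+1) ω' ℓ j|F s]) ω :=
      le_trans (w4 j0 hj0)
        (Finset.single_le_sum (fun j hj => le_trans hqnn (w4 j hj)) hj0)
    have hmul := mul_le_mul_of_nonneg_left hsumge hh0.le
    exact sub_le_sub_left hmul 1
  -- main conditional bound via auxiliary lemma
  intro τ t hτt
  have key := aux_condexp_prod_le μ F hFle hFmono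
      (fun σ ω => 1 - h * ∑ j ∈ L ℓ, a σ ω ℓ j)
      (fun n => 1 - h * (p/(A0+B0*(n:ℝ))^α))
      (fun s => Measurable.sub measurable_const
        (Measurable.const_mul
          (Finset.measurable_sum (L ℓ) (fun j hj => hameas s ℓ j hj)) h))
      (fun s ω => by simpa using sub_nonneg.2 (hhS s ω ℓ))
      (fun s ω => by
        have := mul_nonneg hh0.le (hSnn s ω ℓ)
        linarith)
      hc0 hstepC τ t hτt
  -- deterministic estimate on the product
  have hgstep : ∀ s : ℕ,
      (A0 + B0*((s:ℝ)+1))^(1-α) - (A0+B0*(s:ℝ))^(1-α)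
        ≤ (1-α)*B0 * (1/(A0+B0*(s:ℝ))^α) := by
    intro s
    set u : ℝ := A0 + B0*(s:ℝ) with hu
    have hu1 : (1:ℝ) ≤ u := hA1 s
    have hu0 : (0:ℝ) < u := by linarith
    have hb : A0 + B0*((s:ℝ)+1) = u * (1 + B0/u) := by
      field_simp [hu]
      ring
    have hbu : (0:ℝ) ≤ B0/u := div_nonneg hB0pos.le hu0.le
    rw [hb, Real.mul_rpow hu0.le (by linarith)]
    have hbern : (1 + B0/u)^(1-α) ≤ 1 + (1-α)*(B0/u) :=
      rpow_one_add_le_one_add_mul_self (by linarith) (by linarith) (by linarith)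
    have hmonot : u^(1-α) * (1+B0/u)^(1-α) ≤ u^(1-α) * (1 + (1-α)*(B0/u)) :=
      mul_le_mul_of_nonneg_left hbern (Real.rpow_nonneg hu0.le _)
    have e2 : u^(1-α)/u = 1/u^α := by
      rw [← Real.rpow_sub_one hu0.ne' (1-α), show (1:ℝ)-α-1 = -α by ring,
        Real.rpow_neg hu0.le, one_div]
    have e3 : u^(1-α) * (1 + (1-α)*(B0/u)) = u^(1-α) + (1-α)*B0 * (u^(1-α)/u) := by
      field_simp
    rw [e3, e2] at hmonot
    linarith
  have hsum' : ∀ n : ℕ, τ ≤ n →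
      (A0+B0*(n:ℝ))^(1-α) - (A0+B0*(τ:ℝ))^(1-α)
        ≤ (1-α)*B0 * ∑ s ∈ Finset.Ico τ n, (1/(A0+B0*(s:ℝ))^α) := by
    intro n hn
    induction n, hn using Nat.le_induction with
    | base => simp
    | succ n hn ih =>
      rw [Finset.sum_Ico_succ_top hn, mul_add]
      have h1 := hgstep n
      have hcast : ((n+1 : ℕ):ℝ) = (n:ℝ) + 1 := by push_cast; ring
      rw [hcast]
      linarith
  -- combine
  filter_upwards [key] with ω hω
  refine le_trans hω ?_
  show ∏ s ∈ Finset.Icc τ t, (1 - h * (p/(A0+B0*(s:ℝ))^α)) ≤ _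
  have hC : (0:ℝ) < (1-α)*B0 := mul_pos (by linarith) hB0pos
  have hSxle : ∑ s ∈ Finset.Ico τ t, (1/(A0+B0*(s:ℝ))^α)
      ≤ ∑ s ∈ Finset.Icc τ t, (1/(A0+B0*(s:ℝ))^α) := by
    apply Finset.sum_le_sum_of_subset_of_nonneg Finset.Ico_subset_Icc_self
    intro s _ _
    positivity
  have h2 : (A0+B0*(t:ℝ))^(1-α) - (A0+B0*(τ:ℝ))^(1-α)
      ≤ (1-α)*B0 * ∑ s ∈ Finset.Icc τ t, (1/(A0+B0*(s:ℝ))^α) :=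
    le_trans (hsum' t hτt) (mul_le_mul_of_nonneg_left hSxle hC.le)
  have h3 : (h*p/((1-α)*B0)) * ((A0+B0*(t:ℝ))^(1-α) - (A0+B0*(τ:ℝ))^(1-α))
      ≤ h*p* ∑ s ∈ Finset.Icc τ t, (1/(A0+B0*(s:ℝ))^α) := by
    have h4 := mul_le_mul_of_nonneg_left h2
      (le_of_lt (div_pos (mul_pos hh0 hp0) hC))
    have e5 : h*p/((1-α)*B0) * ((1-α)*B0 * ∑ s ∈ Finset.Icc τ t, (1/(A0+B0*(s:ℝ))^α))
        = h*p* ∑ s ∈ Finset.Icc τ t, (1/(A0+B0*(s:ℝ))^α) := by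
      rw [← mul_assoc, div_mul_cancel₀ _ hC.ne']
    rw [e5] at h4
    exact h4
  have h4 : ∑ s ∈ Finset.Icc τ t, -(h * (p/(A0+B0*(s:ℝ))^α))
      = -(h*p* ∑ s ∈ Finset.Icc τ t, (1/(A0+B0*(s:ℝ))^α)) := by
    rw [Finset.mul_sum, ← Finset.sum_neg_distrib]
    exact Finset.sum_congr rfl fun s _ => by ring
  calc ∏ s ∈ Finset.Icc τ t, (1 - h * (p/(A0+B0*(s:ℝ))^α))
      ≤ ∏ s ∈ Finset.Icc τ t, Real.exp (-(h * (p/(A0+B0*(s:ℝ))^α))) := by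
        apply Finset.prod_le_prod (fun s _ => hc0 s)
        intro s _
        have := Real.add_one_le_exp (-(h * (p/(A0+B0*(s:ℝ))^α)))
        linarith
    _ = Real.exp (∑ s ∈ Finset.Icc τ t, -(h * (p/(A0+B0*(s:ℝ))^α))) :=
        (Real.exp_sum _ _).symm
    _ ≤ Real.exp (-(h * p / ((1 - α) * B0)) *
          ((A0 + B0 * (t:ℝ)) ^ (1 - α) - (A0 + B0 * (τ:ℝ)) ^ (1 - α))) := by
        apply Real.exp_le_exp.2
        rw [h4]
        linarith
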